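/- If L_A(u) ≥ 0 for every u ∈ C̃, then for every P > 0 and every u ∈ C_*^P whose boundary extension is σ-integrable one has L_A(u) ≥ 0. -/

import Mathlib

open MeasureTheory Filter
open scoped ENNReal Topology

noncomputable section

namespace ToricKS

/-- Euclidean space `ℝⁿ`. -/
abbrev E (n : ℕ) : Type := EuclideanSpace ℝ (Fin n)

/-- The open polytope `Δ = {x | ⟨ν k, x⟩ > c k for all k}`. -/
def Poly {n d : ℕ} (ν : Fin d → E n) (c : Fin d → ℝ) : Set (E n) :=
  {x | ∀ k, c k < (inner ℝ (ν k) x : ℝ)}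

/-- The facet `F k = closure Δ ∩ {x | ⟨ν k, x⟩ = c k}`. -/
def Facet {n d : ℕ} (ν : Fin d → E n) (c : Fin d → ℝ) (k : Fin d) : Set (E n) :=
  closure (Poly ν c) ∩ {x | (inner ℝ (ν k) x : ℝ) = c k}

/-- The boundary measure `σ`: on each facet `F k`, `‖ν k‖⁻¹` times the
`(n-1)`-dimensional Hausdorff measure. -/
def bdryMeasure {n d : ℕ} (ν : Fin d → E n) (c : Fin d → ℝ) : Measure (E n) :=
  ∑ k, ENNReal.ofReal (‖ν k‖⁻¹) •
    ((MeasureTheory.Measure.hausdorffMeasure ((n : ℝ) - 1)).restrict (Facet ν c k))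

/-- The partial derivative `∂f/∂x_i`. -/
def pder {n : ℕ} (i : Fin n) (f : E n → ℝ) (x : E n) : ℝ :=
  fderiv ℝ f x (EuclideanSpace.single i 1)

/-- The Hessian matrix `(∂²f/∂x_i∂x_j)`. -/
def hessM {n : ℕ} (f : E n → ℝ) (x : E n) : Matrix (Fin n) (Fin n) ℝ :=
  Matrix.of fun i j => pder i (pder j f) x

/-- The linear functional `L_A(u) = ∫_{∂Δ} u dσ - ∫_Δ A u dμ`. -/
def LA {n d : ℕ} (ν : Fin d → E n) (c : Fin d → ℝ) (A u : E n → ℝ) : ℝ :=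
  ∫ x, u x ∂(bdryMeasure ν c) - ∫ x in Poly ν c, A x * u x

/-- The boundary norm `‖u‖_b = ∫_{∂Δ} u dσ`. -/
def normB {n d : ℕ} (ν : Fin d → E n) (c : Fin d → ℝ) (u : E n → ℝ) : ℝ :=
  ∫ x, u x ∂(bdryMeasure ν c)

/-- The class `C̃` of normalized convex functions: continuous on the closed polytope,
smooth inside, with `u ≥ u(p₀) = 0`. -/
def Ctilde {n d : ℕ} (ν : Fin d → E n) (c : Fin d → ℝ) (p₀ : E n) : Set (E n → ℝ) :=
  {u | ConvexOn ℝ (closure (Poly ν c)) u ∧ ContinuousOn u (closure (Poly ν c)) ∧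
       ContDiffOn ℝ (⊤ : ℕ∞) u (Poly ν c) ∧ u p₀ = 0 ∧ ∀ x ∈ closure (Poly ν c), 0 ≤ u x}

/-- The Guillemin function `u₀(x) = Σ_k δ_k(x) log δ_k(x)`, `δ_k(x) = ⟨ν k, x⟩ - c k`. -/
def GuilleminU0 {n d : ℕ} (ν : Fin d → E n) (c : Fin d → ℝ) (x : E n) : ℝ :=
  ∑ k, ((inner ℝ (ν k) x : ℝ) - c k) * Real.log ((inner ℝ (ν k) x : ℝ) - c k)

/-- The class `S`: continuous convex functions on the closed polytope, smooth with
positive definite Hessian inside, with `u - u₀` extending smoothly to the closed polytope. -/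
def SpaceS {n d : ℕ} (ν : Fin d → E n) (c : Fin d → ℝ) : Set (E n → ℝ) :=
  {v | ConvexOn ℝ (closure (Poly ν c)) v ∧ ContinuousOn v (closure (Poly ν c)) ∧
       ContDiffOn ℝ (⊤ : ℕ∞) v (Poly ν c) ∧ (∀ x ∈ Poly ν c, (hessM v x).PosDef) ∧
       ∃ g : E n → ℝ, ContDiffOn ℝ (⊤ : ℕ∞) g (closure (Poly ν c)) ∧
         ∀ x ∈ closure (Poly ν c), v x - GuilleminU0 ν c x = g x}

/-- `v` solves the Abreu equation `Σ_{i,j} ∂²v^{ij}/∂x_i∂x_j = -A` on `Δ`,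
where `(v^{ij})` is the pointwise inverse of the Hessian of `v`. -/
def AbreuSol {n d : ℕ} (ν : Fin d → E n) (c : Fin d → ℝ) (A v : E n → ℝ) : Prop :=
  ∀ x ∈ Poly ν c, ∑ i, ∑ j, pder i (pder j (fun y => (hessM v y)⁻¹ i j)) x = -A x

/-- The class `C_*^P`: locally uniform limits on `Δ` of sequences in `C̃` with
boundary norm at most `P`. -/
def CstarP {n d : ℕ} (ν : Fin d → E n) (c : Fin d → ℝ) (p₀ : E n) (P : ℝ) : Set (E n → ℝ) :=
  {u | ConvexOn ℝ (Poly ν c) u ∧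
       ∃ uk : ℕ → E n → ℝ, (∀ k, uk k ∈ Ctilde ν c p₀ ∧ normB ν c (uk k) ≤ P) ∧
         TendstoLocallyUniformlyOn uk u atTop (Poly ν c)}

/-- Extension of `u` to a boundary point `q` along the ray from `p₀`:
`u(q) = lim_{t→1⁻} u(p₀ + t(q - p₀)) ∈ [0,∞]`. -/
def bdryExt {n : ℕ} (p₀ : E n) (u : E n → ℝ) (q : E n) : ℝ≥0∞ :=
  limsup (fun t : ℝ => ENNReal.ofReal (u (p₀ + t • (q - p₀)))) (nhdsWithin 1 (Set.Iio 1))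

/-- `L_A(u)` for `u ∈ C_*^P`, using the boundary extension of `u`. -/
def LAstar {n d : ℕ} (ν : Fin d → E n) (c : Fin d → ℝ) (p₀ : E n) (A u : E n → ℝ) : ℝ :=
  (∫⁻ q, bdryExt p₀ u q ∂(bdryMeasure ν c)).toReal - ∫ x in Poly ν c, A x * u x

/-- The Mabuchi functional `F_A(u) = -∫_Δ log det(∂²u/∂x_i∂x_j) dμ + L_A(u)`. -/
def MabuchiF {n d : ℕ} (ν : Fin d → E n) (c : Fin d → ℝ) (A u : E n → ℝ) : ℝ :=
  -(∫ x in Poly ν c, Real.log (hessM u x).det) + LA ν c A u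


section Aux
open Set
variable {n d : ℕ} {ν : Fin d → E n} {c : Fin d → ℝ} {p₀ : E n}

theorem poly_isOpen (ν : Fin d → E n) (c : Fin d → ℝ) : IsOpen (Poly ν c) := by
  have : Poly ν c = ⋂ k, {x : E n | c k < (inner ℝ (ν k) x : ℝ)} := by
    ext x; simp [Poly]
  rw [this]
  exact isOpen_iInter_of_finite fun k =>
    isOpen_lt continuous_const (continuous_const.inner continuous_id)

theorem poly_convex (ν : Fin d → E n) (c : Fin d → ℝ) : Convex ℝ (Poly ν c) := by
  have : Poly ν c = ⋂ k, {x : E n | c k < (inner ℝ (ν k) x : ℝ)} := by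
    ext x; simp [Poly]
  rw [this]
  exact convex_iInter fun k => convex_halfSpace_gt ⟨fun a b => inner_add_right _ _ _,
    fun r a => real_inner_smul_right _ _ _⟩ _

theorem phi_mem_poly (hp₀ : p₀ ∈ Poly ν c) {t : ℝ} (ht0 : 0 ≤ t) (ht1 : t < 1)
    {q : E n} (hq : q ∈ closure (Poly ν c)) : p₀ + t • (q - p₀) ∈ Poly ν c := by
  have h := (poly_convex ν c).combo_interior_closure_mem_interior
    (x := p₀) (y := q) (by rwa [(poly_isOpen ν c).interior_eq]) hq
    (a := 1 - t) (b := t) (by linarith) ht0 (by ring)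
  rw [(poly_isOpen ν c).interior_eq] at h
  convert h using 1
  simp [smul_sub, sub_smul]
  abel

theorem facet_hausdorff_lt_top (hn : 1 ≤ n) (hcomp : IsCompact (closure (Poly ν c)))
    {k : Fin d} (hν : ν k ≠ 0) :
    MeasureTheory.Measure.hausdorffMeasure ((n : ℝ) - 1) (Facet ν c k) < ⊤ := by
  classical
  set W := (ℝ ∙ (ν k))ᗮ with hW
  have hdim : Module.finrank ℝ W = n - 1 := by
    have h1 : Module.finrank ℝ (ℝ ∙ (ν k)) = 1 := finrank_span_singleton hν
    have h2 := Submodule.finrank_add_finrank_orthogonal (K := ℝ ∙ (ν k))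
    rw [h1, finrank_euclideanSpace_fin, ← hW] at h2
    omega
  set m := Module.finrank ℝ W with hm
  set B := stdOrthonormalBasis ℝ W with hB
  set q₀ : E n := (c k / ‖ν k‖ ^ 2) • (ν k) with hq₀
  set g : EuclideanSpace ℝ (Fin m) → E n := fun y => q₀ + ((B.repr.symm y : W) : E n) with hg
  have hgiso : Isometry g := by
    have h1 : Isometry fun x : E n => q₀ + x := Isometry.of_dist_eq fun a b => dist_add_left q₀ a b
    have h2 : Isometry fun w : W => (w : E n) := isometry_subtype_coe
    exact (h1.comp h2).comp B.repr.symm.isometry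
  have hsub : Facet ν c k ⊆ range g := by
    rintro x ⟨hx1, hx2⟩
    have hwmem : x - q₀ ∈ W := by
      rw [hW, Submodule.mem_orthogonal_singleton_iff_inner_right]
      have hnz : ‖ν k‖ ^ 2 ≠ 0 := pow_ne_zero 2 (norm_ne_zero_iff.2 hν)
      rw [inner_sub_right, hx2, hq₀, real_inner_smul_right, real_inner_self_eq_norm_sq]
      field_simp
      simp
    refine ⟨B.repr ⟨x - q₀, hwmem⟩, ?_⟩
    simp [hg]
  have himg : Facet ν c k = g '' (g ⁻¹' (Facet ν c k)) :=
    (Set.image_preimage_eq_of_subset hsub).symm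
  have hd0 : (0 : ℝ) ≤ (n : ℝ) - 1 := by
    have : (1 : ℝ) ≤ (n : ℝ) := by exact_mod_cast hn
    linarith
  rw [himg, hgiso.hausdorffMeasure_image (Or.inl hd0)]
  -- compactness of the preimage
  have hFc : IsCompact (Facet ν c k) := by
    refine hcomp.of_isClosed_subset ?_ Set.inter_subset_left
    exact isClosed_closure.inter (isClosed_eq (continuous_const.inner continuous_id) continuous_const)
  have hcpt : IsCompact (g ⁻¹' (Facet ν c k)) := by
    exact Metric.isCompact_of_isClosed_isBounded ((hFc.isClosed).preimage hgiso.continuous)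
      (hgiso.antilipschitz.isBounded_preimage hFc.isBounded)
  have hcast : (n : ℝ) - 1 = (Module.finrank ℝ (EuclideanSpace ℝ (Fin m)) : ℝ) := by
    rw [finrank_euclideanSpace_fin, hdim]
    have := Nat.cast_sub (R := ℝ) hn
    simp [this]
  rw [hcast]
  exact hcpt.measure_lt_top

theorem bdryMeasure_finite (hn : 1 ≤ n) (hcomp : IsCompact (closure (Poly ν c))) :
    IsFiniteMeasure (bdryMeasure ν c) := by
  constructor
  rw [bdryMeasure]
  simp only [Measure.coe_finset_sum, Finset.sum_apply, Measure.smul_apply,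
    Measure.restrict_apply_univ, smul_eq_mul]
  refine ENNReal.sum_lt_top.2 fun k _ => ?_
  by_cases hν : ν k = 0
  · simp [hν]
  · exact ENNReal.mul_lt_top ENNReal.ofReal_lt_top (facet_hausdorff_lt_top hn hcomp hν)

theorem bdry_ae_mem (ν : Fin d → E n) (c : Fin d → ℝ) :
    ∀ᵐ q ∂(bdryMeasure ν c), q ∈ closure (Poly ν c) := by
  rw [ae_iff]
  have hms : MeasurableSet {q : E n | ¬q ∈ closure (Poly ν c)} :=
    (isClosed_closure.measurableSet).compl
  rw [bdryMeasure]
  simp only [Measure.coe_finset_sum, Finset.sum_apply, Measure.smul_apply,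
    Measure.restrict_apply hms, smul_eq_mul]
  have : ∀ k : Fin d, {q : E n | ¬q ∈ closure (Poly ν c)} ∩ Facet ν c k = ∅ := by
    intro k
    ext q
    simp only [Set.mem_inter_iff, Set.mem_setOf_eq, Set.mem_empty_iff_false, iff_false, not_and]
    intro h1 h2
    exact h1 h2.1
  simp [this]

theorem bdry_restrict_eq (ν : Fin d → E n) (c : Fin d → ℝ) :
    (bdryMeasure ν c).restrict (closure (Poly ν c)) = bdryMeasure ν c :=
  Measure.restrict_eq_self_of_ae_mem (bdry_ae_mem ν c)

theorem bdry_aesm {f : E n → ℝ} (hf : ContinuousOn f (closure (Poly ν c))) :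
    AEStronglyMeasurable f (bdryMeasure ν c) := by
  rw [← bdry_restrict_eq ν c]
  exact hf.aestronglyMeasurable isClosed_closure.measurableSet

theorem bdry_integrable (hn : 1 ≤ n) (hcomp : IsCompact (closure (Poly ν c)))
    {f : E n → ℝ} (hf : ContinuousOn f (closure (Poly ν c))) :
    Integrable f (bdryMeasure ν c) := by
  haveI := bdryMeasure_finite (ν := ν) (c := c) hn hcomp
  obtain ⟨C, hC⟩ := hcomp.exists_bound_of_continuousOn hf
  refine ⟨bdry_aesm hf, HasFiniteIntegral.of_bounded (C := C) ?_⟩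
  filter_upwards [bdry_ae_mem ν c] with q hq using hC q hq

theorem phi_contDiff (p₀ : E n) (t : ℝ) :
    ContDiff ℝ (⊤ : ℕ∞) (fun x : E n => p₀ + t • (x - p₀)) :=
  contDiff_const.add ((contDiff_id.sub contDiff_const).const_smul t)

theorem dilate_mem_Ctilde (hp₀ : p₀ ∈ Poly ν c) {u : E n → ℝ} (hu : u ∈ Ctilde ν c p₀)
    {t : ℝ} (ht0 : 0 ≤ t) (ht1 : t < 1) :
    (fun x => u (p₀ + t • (x - p₀))) ∈ Ctilde ν c p₀ := by
  obtain ⟨hconv, hcont, hsmooth, hval, hnonneg⟩ := hu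
  have hphi : (fun x : E n => p₀ + t • (x - p₀)) = ⇑(AffineMap.homothety p₀ t) := by
    funext x
    simp [AffineMap.homothety_apply, vsub_eq_sub, vadd_eq_add, add_comm]
  have hmaps : ∀ x ∈ closure (Poly ν c), p₀ + t • (x - p₀) ∈ Poly ν c :=
    fun x hx => phi_mem_poly hp₀ ht0 ht1 hx
  refine ⟨?_, ?_, ?_, ?_, ?_⟩
  · have h1 : ConvexOn ℝ ((AffineMap.homothety p₀ t) ⁻¹' closure (Poly ν c))
        (u ∘ ⇑(AffineMap.homothety p₀ t)) := hconv.comp_affineMap _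
    have h2 : closure (Poly ν c) ⊆ (AffineMap.homothety p₀ t) ⁻¹' closure (Poly ν c) := by
      intro x hx
      rw [Set.mem_preimage, ← hphi]
      exact subset_closure (hmaps x hx)
    have heq : (fun x => u (p₀ + t • (x - p₀))) = u ∘ ⇑(AffineMap.homothety p₀ t) := by
      rw [← hphi]; rfl
    rw [heq]
    exact h1.subset h2 ((poly_convex ν c).closure)
  · exact hcont.comp ((phi_contDiff p₀ t).continuous).continuousOn
      fun x hx => subset_closure (hmaps x hx)
  · exact hsmooth.comp ((phi_contDiff p₀ t).contDiffOn)
      fun x hx => hmaps x (subset_closure hx)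
  · simp [hval]
  · exact fun x hx => hnonneg _ (subset_closure (hmaps x hx))

theorem mono_along_ray (hp₀ : p₀ ∈ Poly ν c) {u : E n → ℝ}
    (hconv : ConvexOn ℝ (Poly ν c) u) (hnonneg : ∀ x ∈ Poly ν c, 0 ≤ u x)
    (hval : u p₀ = 0) {q : E n} {s t : ℝ} (hs0 : 0 ≤ s) (hst : s ≤ t) (ht1 : t ≤ 1)
    (htmem : p₀ + t • (q - p₀) ∈ Poly ν c) :
    u (p₀ + s • (q - p₀)) ≤ u (p₀ + t • (q - p₀)) := by
  rcases eq_or_lt_of_le hs0 with h0 | hs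
  · rw [← h0]
    simpa [hval] using hnonneg _ htmem
  · have ht : 0 < t := lt_of_lt_of_le hs hst
    have hb0 : 0 ≤ s / t := by positivity
    have hb1 : s / t ≤ 1 := by
      rw [div_le_one ht]; exact hst
    have hcombo : (1 - s / t) • p₀ + (s / t) • (p₀ + t • (q - p₀)) = p₀ + s • (q - p₀) := by
      have hst' : s / t * t = s := div_mul_cancel₀ s ht.ne'
      rw [smul_add, smul_smul, hst', sub_smul, one_smul]
      abel
    have h := hconv.2 hp₀ htmem (by linarith : (0:ℝ) ≤ 1 - s / t) hb0 (by ring)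
    rw [hcombo] at h
    calc u (p₀ + s • (q - p₀)) ≤ (1 - s / t) * u p₀ + (s / t) * u (p₀ + t • (q - p₀)) := h
      _ = (s / t) * u (p₀ + t • (q - p₀)) := by rw [hval]; ring
      _ ≤ 1 * u (p₀ + t • (q - p₀)) := by
          have := hnonneg _ htmem
          nlinarith
      _ = _ := one_mul _

theorem le_add_eps {a b : ℝ} (h : ∀ ε : ℝ, 0 < ε → a ≤ b + ε) : a ≤ b := by
  by_contra hc
  push_neg at hc
  have := h ((a - b) / 2) (by linarith)
  linarith

theorem step_alpha (hn : 1 ≤ n) (hcomp : IsCompact (closure (Poly ν c)))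
    (hp₀ : p₀ ∈ Poly ν c) {A : E n → ℝ} (hA : ContinuousOn A (closure (Poly ν c)))
    (hCt : ∀ u ∈ Ctilde ν c p₀, 0 ≤ LA ν c A u)
    {u : E n → ℝ} {uk : ℕ → E n → ℝ} (huk : ∀ k, uk k ∈ Ctilde ν c p₀)
    (hlim : TendstoLocallyUniformlyOn uk u atTop (Poly ν c))
    (hucont : ContinuousOn u (Poly ν c))
    {t : ℝ} (ht0 : 0 ≤ t) (ht1 : t < 1) :
    ∫ x in Poly ν c, A x * u (p₀ + t • (x - p₀)) ≤
      ∫ q, u (p₀ + t • (q - p₀)) ∂(bdryMeasure ν c) := by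
  haveI hσfin := bdryMeasure_finite (ν := ν) (c := c) hn hcomp
  haveI hvfin : IsFiniteMeasure (volume.restrict (Poly ν c)) := by
    constructor
    rw [Measure.restrict_apply_univ]
    exact (measure_mono subset_closure).trans_lt hcomp.measure_lt_top
  set φ : E n → E n := fun x => p₀ + t • (x - p₀) with hφ
  have hmaps : ∀ x ∈ closure (Poly ν c), φ x ∈ Poly ν c :=
    fun x hx => phi_mem_poly hp₀ ht0 ht1 hx
  set Kt : Set (E n) := φ '' closure (Poly ν c) with hKt
  have hKtcpt : IsCompact Kt := hcomp.image (phi_contDiff p₀ t).continuous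
  have hKtsub : Kt ⊆ Poly ν c := by
    rintro y ⟨x, hx, rfl⟩
    exact hmaps x hx
  -- continuity of u ∘ φ on the closure
  have hutcont : ContinuousOn (fun x => u (φ x)) (closure (Poly ν c)) :=
    hucont.comp (phi_contDiff p₀ t).continuous.continuousOn
      fun x hx => hmaps x hx
  have huktcont : ∀ k, ContinuousOn (fun x => uk k (φ x)) (closure (Poly ν c)) :=
    fun k => ((huk k).2.1).comp (phi_contDiff p₀ t).continuous.continuousOn
      fun x hx => subset_closure (hmaps x hx)
  -- bound for A
  obtain ⟨C, hC⟩ := hcomp.exists_bound_of_continuousOn hA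
  have hC0 : 0 ≤ C := le_trans (norm_nonneg _) (hC p₀ (subset_closure hp₀))
  -- integrability
  have hint_ut : IntegrableOn (fun x => A x * u (φ x)) (Poly ν c) :=
    ((hA.mul hutcont).integrableOn_compact hcomp).mono_set subset_closure
  have hint_ukt : ∀ k, IntegrableOn (fun x => A x * uk k (φ x)) (Poly ν c) :=
    fun k => ((hA.mul (huktcont k)).integrableOn_compact hcomp).mono_set subset_closure
  have hσint_ut : Integrable (fun q => u (φ q)) (bdryMeasure ν c) :=
    bdry_integrable hn hcomp hutcont
  have hσint_ukt : ∀ k, Integrable (fun q => uk k (φ q)) (bdryMeasure ν c) :=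
    fun k => bdry_integrable hn hcomp (huktcont k)
  -- uniform convergence on Kt
  have hunif : TendstoUniformlyOn uk u atTop Kt :=
    (tendstoLocallyUniformlyOn_iff_forall_isCompact (poly_isOpen ν c)).1 hlim Kt hKtsub hKtcpt
  -- the ε-argument
  apply le_add_eps
  intro ε hε
  set V := (volume (Poly ν c)).toReal with hV
  set S := ((bdryMeasure ν c) Set.univ).toReal with hS
  have hV0 : 0 ≤ V := ENNReal.toReal_nonneg
  have hS0 : 0 ≤ S := ENNReal.toReal_nonneg
  set ε' : ℝ := ε / (C * V + S + 1) with hε'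
  have hden : 0 < C * V + S + 1 := by positivity
  have hε'0 : 0 < ε' := by positivity
  obtain ⟨k, hk⟩ := (Metric.tendstoUniformlyOn_iff.1 hunif ε' hε'0).exists
  -- pointwise bounds
  have hbd1 : ∀ x ∈ Poly ν c, ‖A x * u (φ x) - A x * uk k (φ x)‖ ≤ C * ε' := by
    intro x hx
    have h1 : ‖A x‖ ≤ C := hC x (subset_closure hx)
    have h2 : dist (u (φ x)) (uk k (φ x)) < ε' := hk (φ x) ⟨x, subset_closure hx, rfl⟩
    rw [← mul_sub, norm_mul]
    have h3 : |u (φ x) - uk k (φ x)| ≤ ε' := by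
      rw [← Real.dist_eq]
      exact h2.le
    exact mul_le_mul h1 (by rwa [Real.norm_eq_abs]) (norm_nonneg _) hC0
  have hbd2 : ∀ q ∈ closure (Poly ν c), ‖uk k (φ q) - u (φ q)‖ ≤ ε' := by
    intro q hq
    have h2 : dist (u (φ q)) (uk k (φ q)) < ε' := hk (φ q) ⟨q, hq, rfl⟩
    rw [norm_sub_rev]
    rw [Real.dist_eq] at h2
    exact (Real.norm_eq_abs _ ▸ h2).le
  -- inequality (1)
  have h1 : ∫ x in Poly ν c, A x * u (φ x) ≤ (∫ x in Poly ν c, A x * uk k (φ x)) + C * ε' * V := by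
    have heq : ∫ x in Poly ν c, (A x * u (φ x) - A x * uk k (φ x)) =
        (∫ x in Poly ν c, A x * u (φ x)) - ∫ x in Poly ν c, A x * uk k (φ x) :=
      integral_sub hint_ut (hint_ukt k)
    have hnorm : ‖∫ x in Poly ν c, (A x * u (φ x) - A x * uk k (φ x))‖ ≤ (C * ε') * V := by
      refine le_trans (norm_integral_le_of_norm_le_const (C := C * ε') ?_) ?_
      · filter_upwards [ae_restrict_mem (poly_isOpen ν c).measurableSet] with x hx
        exact hbd1 x hx
      · rw [Measure.real_def, Measure.restrict_apply_univ]
    rw [heq, Real.norm_eq_abs, abs_le] at hnorm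
    linarith [hnorm.2]
  -- inequality (2)
  have h2 : ∫ x in Poly ν c, A x * uk k (φ x) ≤ ∫ q, uk k (φ q) ∂(bdryMeasure ν c) := by
    have := hCt _ (dilate_mem_Ctilde hp₀ (huk k) ht0 ht1)
    rw [LA] at this
    linarith
  -- inequality (3)
  have h3 : ∫ q, uk k (φ q) ∂(bdryMeasure ν c) ≤
      (∫ q, u (φ q) ∂(bdryMeasure ν c)) + ε' * S := by
    have heq : ∫ q, (uk k (φ q) - u (φ q)) ∂(bdryMeasure ν c) =
        (∫ q, uk k (φ q) ∂(bdryMeasure ν c)) - ∫ q, u (φ q) ∂(bdryMeasure ν c) :=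
      integral_sub (hσint_ukt k) hσint_ut
    have hnorm : ‖∫ q, (uk k (φ q) - u (φ q)) ∂(bdryMeasure ν c)‖ ≤ ε' * S := by
      refine le_trans (norm_integral_le_of_norm_le_const (C := ε') ?_) le_rfl
      filter_upwards [bdry_ae_mem ν c] with q hq
      exact hbd2 q hq
    rw [heq, Real.norm_eq_abs, abs_le] at hnorm
    linarith [hnorm.2]
  have hfin : C * ε' * V + ε' * S ≤ ε := by
    have : ε' * (C * V + S + 1) = ε := by
      rw [hε']
      field_simp
    nlinarith [hε'0.le]
  linarith

theorem bdryExt_eq_iSup (hp₀ : p₀ ∈ Poly ν c) {u : E n → ℝ}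
    (hconv : ConvexOn ℝ (Poly ν c) u) (hnonneg : ∀ x ∈ Poly ν c, 0 ≤ u x) (hval : u p₀ = 0)
    {ts : ℕ → ℝ} (h0 : ∀ m, 0 < ts m) (h1 : ∀ m, ts m < 1) (hmono : Monotone ts)
    (hdense : ∀ s : ℝ, 0 < s → s < 1 → ∃ m, s ≤ ts m)
    {q : E n} (hq : q ∈ closure (Poly ν c)) :
    bdryExt p₀ u q = ⨆ m, ENNReal.ofReal (u (p₀ + ts m • (q - p₀))) := by
  rw [bdryExt]
  apply le_antisymm
  · apply limsup_le_of_le (by isBoundedDefault)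
    have hev : Set.Ioo (ts 0) 1 ∈ 𝓝[<] (1 : ℝ) :=
      Ioo_mem_nhdsLT_of_mem ⟨h1 0, le_refl (1 : ℝ)⟩
    filter_upwards [hev] with t ht
    obtain ⟨m, hm⟩ := hdense t (lt_trans (h0 0) ht.1) ht.2
    refine le_trans (ENNReal.ofReal_le_ofReal ?_) (le_iSup (fun m => ENNReal.ofReal (u (p₀ + ts m • (q - p₀)))) m)
    exact mono_along_ray hp₀ hconv hnonneg hval (le_of_lt (lt_trans (h0 0) ht.1)) hm
      (le_of_lt (h1 m)) (phi_mem_poly hp₀ (h0 m).le (h1 m) hq)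
  · apply iSup_le
    intro m
    refine le_limsup_of_frequently_le ?_ (by isBoundedDefault)
    apply Eventually.frequently
    have hev : Set.Ioo (ts m) 1 ∈ 𝓝[<] (1 : ℝ) :=
      Ioo_mem_nhdsLT_of_mem ⟨h1 m, le_refl (1 : ℝ)⟩
    filter_upwards [hev] with t ht
    refine ENNReal.ofReal_le_ofReal ?_
    exact mono_along_ray hp₀ hconv hnonneg hval (h0 m).le ht.1.le (le_of_lt ht.2)
      (phi_mem_poly hp₀ (le_trans (h0 m).le ht.1.le) ht.2 hq)

theorem iSup_ofReal_eq {g : ℕ → ℝ} {a : ℝ}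
    (hmono : Monotone fun m => ENNReal.ofReal (g m)) (h : Tendsto g atTop (𝓝 a)) :
    ⨆ m, ENNReal.ofReal (g m) = ENNReal.ofReal a :=
  tendsto_nhds_unique (tendsto_atTop_iSup hmono)
    ((ENNReal.continuous_ofReal.tendsto a).comp h)

end Aux

open Set in
/-- nonnegativity of `L_A` on `C̃` implies nonnegativity on every
`C_*^P` with σ-integrable boundary extension. -/
theorem LA_nonneg_on_Cstar_of_nonneg_on_Ctilde
    {n d : ℕ} (hn : 1 ≤ n) (ν : Fin d → E n) (c : Fin d → ℝ)
    (hcomp : IsCompact (closure (Poly ν c)))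
    (p₀ : E n) (hp₀ : p₀ ∈ Poly ν c)
    (A : E n → ℝ) (hA : ContDiffOn ℝ (⊤ : ℕ∞) A (closure (Poly ν c)))
    (hCt : ∀ u ∈ Ctilde ν c p₀, 0 ≤ LA ν c A u) :
    ∀ P : ℝ, 0 < P → ∀ u ∈ CstarP ν c p₀ P,
      (∫⁻ q, bdryExt p₀ u q ∂(bdryMeasure ν c)) ≠ ⊤ →
      0 ≤ LAstar ν c p₀ A u := by
  intro P hP u hu hfin
  obtain ⟨hconv, uk, huk, hlim⟩ := hu
  have hAc : ContinuousOn A (closure (Poly ν c)) := hA.continuousOn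
  haveI hσfin := bdryMeasure_finite (ν := ν) (c := c) hn hcomp
  haveI hvfin : IsFiniteMeasure (volume.restrict (Poly ν c)) := by
    constructor
    rw [Measure.restrict_apply_univ]
    exact (measure_mono subset_closure).trans_lt hcomp.measure_lt_top
  have hms : MeasurableSet (Poly ν c) := (poly_isOpen ν c).measurableSet
  -- basic facts about u
  have hnonneg : ∀ x ∈ Poly ν c, 0 ≤ u x := fun x hx =>
    ge_of_tendsto' (hlim.tendsto_at hx) fun k => (huk k).1.2.2.2.2 x (subset_closure hx)
  have hval : u p₀ = 0 := by
    have h1 : Tendsto (fun k => uk k p₀) atTop (𝓝 (u p₀)) := hlim.tendsto_at hp₀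
    have h2 : (fun k => uk k p₀) = fun _ => (0 : ℝ) := funext fun k => (huk k).1.2.2.2.1
    rw [h2] at h1
    exact tendsto_nhds_unique h1 tendsto_const_nhds
  have hucont : ContinuousOn u (Poly ν c) := ConvexOn.continuousOn (poly_isOpen ν c) hconv
  -- the dilation sequence
  set ts : ℕ → ℝ := fun m => 1 - 1 / (m + 2) with hts
  have hts0 : ∀ m, 0 < ts m := by
    intro m
    have h0 : (0 : ℝ) ≤ (m : ℝ) := Nat.cast_nonneg m
    have : 1 / ((m : ℝ) + 2) ≤ 1 / 2 := by
      apply one_div_le_one_div_of_le <;> linarith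
    simp only [hts]
    linarith
  have hts1 : ∀ m, ts m < 1 := by
    intro m
    have : 0 < 1 / ((m : ℝ) + 2) := by positivity
    simp only [hts]
    linarith
  have htsmono : Monotone ts := by
    intro a b hab
    have hab' : (a : ℝ) + 2 ≤ (b : ℝ) + 2 := by
      have := Nat.cast_le (α := ℝ).2 hab
      linarith
    have h0 : (0 : ℝ) ≤ (a : ℝ) := Nat.cast_nonneg a
    have := one_div_le_one_div_of_le (by linarith : (0:ℝ) < (a:ℝ) + 2) hab'
    simp only [hts]
    linarith
  have htsdense : ∀ s : ℝ, 0 < s → s < 1 → ∃ m, s ≤ ts m := by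
    intro s hs0 hs1
    have h1s : 0 < 1 - s := by linarith
    obtain ⟨m, hm⟩ := exists_nat_gt (1 / (1 - s))
    refine ⟨m, ?_⟩
    have h2 : 1 / (1 - s) < (m : ℝ) + 2 := by linarith
    have h3 : 1 / ((m : ℝ) + 2) < 1 - s := by
      rw [div_lt_iff₀ (by positivity)]
      rw [div_lt_iff₀ h1s] at h2
      nlinarith
    simp only [hts]
    linarith
  have htstend : Tendsto ts atTop (𝓝 1) := by
    have h1 : Tendsto (fun m : ℕ => (m : ℝ) + 2) atTop atTop :=
      tendsto_atTop_add_const_right _ 2 tendsto_natCast_atTop_atTop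
    have h2 : Tendsto (fun m : ℕ => 1 / ((m : ℝ) + 2)) atTop (𝓝 0) := by
      simpa [one_div, Pi.inv_def] using h1.inv_tendsto_atTop
    have := tendsto_const_nhds (x := (1:ℝ)) (f := atTop (α := ℕ)) |>.sub h2
    simpa [hts, one_div] using this
  -- pointwise monotonicity
  have hmaps : ∀ m, ∀ q ∈ closure (Poly ν c), p₀ + ts m • (q - p₀) ∈ Poly ν c :=
    fun m q hq => phi_mem_poly hp₀ (hts0 m).le (hts1 m) hq
  have hptmono : ∀ q ∈ closure (Poly ν c),
      Monotone fun m => ENNReal.ofReal (u (p₀ + ts m • (q - p₀))) := by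
    intro q hq a b hab
    exact ENNReal.ofReal_le_ofReal (mono_along_ray hp₀ hconv hnonneg hval (hts0 a).le
      (htsmono hab) (hts1 b).le (hmaps b q hq))
  -- continuity of dilates
  have hφcont : ∀ m, ContinuousOn (fun x => u (p₀ + ts m • (x - p₀))) (closure (Poly ν c)) :=
    fun m => hucont.comp (phi_contDiff p₀ (ts m)).continuous.continuousOn
      fun q hq => hmaps m q hq
  set L := ∫⁻ q, bdryExt p₀ u q ∂(bdryMeasure ν c) with hL
  -- L as supremum
  have hLsup : L = ⨆ m, ∫⁻ q, ENNReal.ofReal (u (p₀ + ts m • (q - p₀))) ∂(bdryMeasure ν c) := by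
    rw [hL, ← lintegral_iSup']
    · apply lintegral_congr_ae
      filter_upwards [bdry_ae_mem ν c] with q hq
      exact bdryExt_eq_iSup hp₀ hconv hnonneg hval hts0 hts1 htsmono
        (fun s h1 h2 => htsdense s h1 h2) hq
    · exact fun m => ENNReal.measurable_ofReal.comp_aemeasurable
        (bdry_aesm (hφcont m)).aemeasurable
    · filter_upwards [bdry_ae_mem ν c] with q hq
      exact hptmono q hq
  -- step beta
  have hβ : ∀ m, ∫ q, u (p₀ + ts m • (q - p₀)) ∂(bdryMeasure ν c) ≤ L.toReal := by
    intro m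
    rw [integral_eq_lintegral_of_nonneg_ae]
    · apply ENNReal.toReal_mono hfin
      rw [hLsup]
      exact le_iSup (fun m => ∫⁻ q, ENNReal.ofReal (u (p₀ + ts m • (q - p₀)))
        ∂(bdryMeasure ν c)) m
    · filter_upwards [bdry_ae_mem ν c] with q hq
      exact hnonneg _ (hmaps m q hq)
    · exact bdry_aesm (hφcont m)
  -- step alpha
  have hαβ : ∀ m, ∫ x in Poly ν c, A x * u (p₀ + ts m • (x - p₀)) ≤ L.toReal := fun m =>
    (step_alpha hn hcomp hp₀ hAc hCt (fun k => (huk k).1) hlim hucont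
      (hts0 m).le (hts1 m)).trans (hβ m)
  -- conclusion
  rw [LAstar, sub_nonneg]
  by_cases hInt : Integrable (fun x => A x * u x) (volume.restrict (Poly ν c))
  swap
  · rw [integral_undef hInt]
    exact ENNReal.toReal_nonneg
  · set μ := volume.restrict (Poly ν c) with hμ
    have hAaem : AEMeasurable A μ := (hAc.mono subset_closure).aemeasurable hms
    have hφaem : ∀ m, AEMeasurable (fun x => u (p₀ + ts m • (x - p₀))) μ :=
      fun m => ((hφcont m).mono subset_closure).aemeasurable hms
    set g : ℕ → E n → ℝ≥0∞ :=
      fun m x => ENNReal.ofReal (A x) * ENNReal.ofReal (u (p₀ + ts m • (x - p₀))) with hgdef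
    set gn : ℕ → E n → ℝ≥0∞ :=
      fun m x => ENNReal.ofReal (-A x) * ENNReal.ofReal (u (p₀ + ts m • (x - p₀))) with hgndef
    have hgaem : ∀ m, AEMeasurable (g m) μ := fun m =>
      (ENNReal.measurable_ofReal.comp_aemeasurable hAaem).mul
        (ENNReal.measurable_ofReal.comp_aemeasurable (hφaem m))
    have hgnaem : ∀ m, AEMeasurable (gn m) μ := fun m =>
      (ENNReal.measurable_ofReal.comp_aemeasurable hAaem.neg).mul
        (ENNReal.measurable_ofReal.comp_aemeasurable (hφaem m))
    have hgmono : ∀ᵐ x ∂μ, Monotone fun m => g m x := by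
      filter_upwards [ae_restrict_mem hms] with x hx a b hab
      exact mul_le_mul_right (hptmono x (subset_closure hx) hab) _
    have hgnmono : ∀ᵐ x ∂μ, Monotone fun m => gn m x := by
      filter_upwards [ae_restrict_mem hms] with x hx a b hab
      exact mul_le_mul_right (hptmono x (subset_closure hx) hab) _
    have hsup_u : ∀ x ∈ Poly ν c,
        (⨆ m, ENNReal.ofReal (u (p₀ + ts m • (x - p₀)))) = ENNReal.ofReal (u x) := by
      intro x hx
      apply iSup_ofReal_eq (hptmono x (subset_closure hx))
      have hxpt : Tendsto (fun m => p₀ + ts m • (x - p₀)) atTop (𝓝 x) := by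
        have h := (htstend.smul_const (x - p₀)).const_add p₀
        rw [one_smul] at h
        simpa using h
      exact ((hucont.continuousAt ((poly_isOpen ν c).mem_nhds hx)).tendsto).comp hxpt
    -- convergence of positive-part lintegrals
    have hQ : Tendsto (fun m => ∫⁻ x, g m x ∂μ) atTop
        (𝓝 (∫⁻ x, ENNReal.ofReal (A x) * ENNReal.ofReal (u x) ∂μ)) := by
      have h1 : (∫⁻ x, ⨆ m, g m x ∂μ) = ⨆ m, ∫⁻ x, g m x ∂μ := lintegral_iSup' hgaem hgmono
      have h2 : (∫⁻ x, ⨆ m, g m x ∂μ) =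
          ∫⁻ x, ENNReal.ofReal (A x) * ENNReal.ofReal (u x) ∂μ := by
        apply lintegral_congr_ae
        filter_upwards [ae_restrict_mem hms] with x hx
        rw [hgdef]
        simp only
        rw [← ENNReal.mul_iSup, hsup_u x hx]
      have hmono' : Monotone fun m => ∫⁻ x, g m x ∂μ := fun a b hab =>
        lintegral_mono_ae (hgmono.mono fun x hx => hx hab)
      have h3 := tendsto_atTop_iSup hmono'
      rw [← h1, h2] at h3
      exact h3
    have hR : Tendsto (fun m => ∫⁻ x, gn m x ∂μ) atTop
        (𝓝 (∫⁻ x, ENNReal.ofReal (-A x) * ENNReal.ofReal (u x) ∂μ)) := by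
      have h1 : (∫⁻ x, ⨆ m, gn m x ∂μ) = ⨆ m, ∫⁻ x, gn m x ∂μ := lintegral_iSup' hgnaem hgnmono
      have h2 : (∫⁻ x, ⨆ m, gn m x ∂μ) =
          ∫⁻ x, ENNReal.ofReal (-A x) * ENNReal.ofReal (u x) ∂μ := by
        apply lintegral_congr_ae
        filter_upwards [ae_restrict_mem hms] with x hx
        rw [hgndef]
        simp only
        rw [← ENNReal.mul_iSup, hsup_u x hx]
      have hmono' : Monotone fun m => ∫⁻ x, gn m x ∂μ := fun a b hab =>
        lintegral_mono_ae (hgnmono.mono fun x hx => hx hab)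
      have h3 := tendsto_atTop_iSup hmono'
      rw [← h1, h2] at h3
      exact h3
    -- finiteness of the limit lintegrals
    have hFI : (∫⁻ x, (‖A x * u x‖₊ : ℝ≥0∞) ∂μ) < ⊤ := hInt.2
    have hQtop : (∫⁻ x, ENNReal.ofReal (A x) * ENNReal.ofReal (u x) ∂μ) ≠ ⊤ := by
      refine ne_of_lt (lt_of_le_of_lt (lintegral_mono_ae ?_) hFI)
      filter_upwards [ae_restrict_mem hms] with x hx
      rw [← ENNReal.ofReal_mul' (hnonneg x hx)]
      exact Real.ofReal_le_enorm _
    have hRtop : (∫⁻ x, ENNReal.ofReal (-A x) * ENNReal.ofReal (u x) ∂μ) ≠ ⊤ := by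
      refine ne_of_lt (lt_of_le_of_lt (lintegral_mono_ae ?_) hFI)
      filter_upwards [ae_restrict_mem hms] with x hx
      rw [← ENNReal.ofReal_mul' (hnonneg x hx), neg_mul]
      refine le_trans (Real.ofReal_le_enorm _) ?_
      exact (enorm_neg _).le
    -- expressions for the integrals
    have hIm_int : ∀ m, Integrable (fun x => A x * u (p₀ + ts m • (x - p₀))) μ := fun m =>
      ((hAc.mul (hφcont m)).integrableOn_compact hcomp).mono_set subset_closure
    have hIm : ∀ m, ∫ x, A x * u (p₀ + ts m • (x - p₀)) ∂μ =
        (∫⁻ x, g m x ∂μ).toReal - (∫⁻ x, gn m x ∂μ).toReal := by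
      intro m
      rw [integral_eq_lintegral_pos_part_sub_lintegral_neg_part (hIm_int m)]
      congr 1
      · congr 1
        apply lintegral_congr_ae
        filter_upwards [ae_restrict_mem hms] with x hx
        rw [ENNReal.ofReal_mul' (hnonneg _ (hmaps m x (subset_closure hx)))]
      · congr 1
        apply lintegral_congr_ae
        filter_upwards [ae_restrict_mem hms] with x hx
        rw [neg_mul_eq_neg_mul, ENNReal.ofReal_mul' (hnonneg _ (hmaps m x (subset_closure hx)))]
    have hI : ∫ x, A x * u x ∂μ =
        (∫⁻ x, ENNReal.ofReal (A x) * ENNReal.ofReal (u x) ∂μ).toReal -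
          (∫⁻ x, ENNReal.ofReal (-A x) * ENNReal.ofReal (u x) ∂μ).toReal := by
      rw [integral_eq_lintegral_pos_part_sub_lintegral_neg_part hInt]
      congr 1
      · congr 1
        apply lintegral_congr_ae
        filter_upwards [ae_restrict_mem hms] with x hx
        rw [ENNReal.ofReal_mul' (hnonneg x hx)]
      · congr 1
        apply lintegral_congr_ae
        filter_upwards [ae_restrict_mem hms] with x hx
        rw [neg_mul_eq_neg_mul, ENNReal.ofReal_mul' (hnonneg x hx)]
    -- pass to the limit
    have hQt := (ENNReal.tendsto_toReal hQtop).comp hQ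
    have hRt := (ENNReal.tendsto_toReal hRtop).comp hR
    have hImt : Tendsto (fun m => ∫ x, A x * u (p₀ + ts m • (x - p₀)) ∂μ) atTop
        (𝓝 (∫ x, A x * u x ∂μ)) := by
      rw [hI]
      exact Tendsto.congr (fun m => (hIm m).symm) (hQt.sub hRt)
    exact le_of_tendsto hImt (Eventually.of_forall fun m => hαβ m)

end ToricKS
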